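/- arXiv:1211.1314 — 4 statements merged into one kernel-verified Lean document; each statement's English description precedes it below -/
import Mathlib

section
/- For all real z ≥ 0, one has (4z · coth(πz/2)) / (π · √(z² + 1)) ≤ 4/π, i.e. z · coth(πz/2) ≤ √(z² + 1). -/
open Real

/-! With `t = π z / 2`, squaring turns the claim into `z² cosh² t ≤ (z² + 1) sinh² t`, which by
`cosh² t = 1 + sinh² t` is just `z² ≤ sinh² t`; and indeed `z ≤ t ≤ sinh t` because `π / 2 ≥ 1`. -/

theorem mul_cosh_div_sinh_le_sqrt {z t : ℝ} (hz : 0 ≤ z) (hzt : z ≤ sinh t) :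
    z * (cosh t / sinh t) ≤ √(z ^ 2 + 1) := by
  rcases hz.eq_or_lt with rfl | hz_pos
  · simp
  have hsinh : 0 < sinh t := hz_pos.trans_le hzt
  have hz_sq : z ^ 2 ≤ sinh t ^ 2 := pow_le_pow_left₀ hz hzt 2
  rw [le_sqrt (by positivity) (by positivity), mul_pow, div_pow, mul_div_assoc',
    div_le_iff₀ (by positivity), cosh_sq t]
  nlinarith

theorem le_sinh_pi_mul_div_two {z : ℝ} (hz : 0 ≤ z) : z ≤ sinh (π * z / 2) := by
  have hz_le : z ≤ π * z / 2 := by nlinarith [pi_gt_three]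
  exact hz_le.trans (self_le_sinh_iff.mpr (by positivity))

/-- For all real `z ≥ 0`, `z * coth (π z / 2) ≤ √(z² + 1)`, i.e.
`(4 z coth(π z/2)) / (π √(z²+1)) ≤ 4/π`. (At `z = 0` the left-hand side is `0`
by the convention `sinh 0 = 0` and division by zero.) -/
theorem coth_estimate (z : ℝ) (hz : 0 ≤ z) :
    z * (Real.cosh (Real.pi * z / 2) / Real.sinh (Real.pi * z / 2)) ≤
      Real.sqrt (z ^ 2 + 1) :=
  mul_cosh_div_sinh_le_sqrt hz (le_sinh_pi_mul_div_two hz)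
end

section
/- For all real z with 0 ≤ z ≤ 1, one has (4z · cot(πz/2)) / (π · √(1 − z²)) ≤ 8/π², i.e. z · cot(πz/2) ≤ (2/π) · √(1 − z²), where at z = 0 and z = 1 the expression is interpreted by its continuous extension. -/
/-!
With `t = π z / 2`: for `z ≤ 4/5` the Taylor bound `t cot t ≤ 1 - t² / 3` gives
`z cot (π z / 2) ≤ (2 / π) (1 - π² z² / 12)`, which is below `(2 / π) √(1 - z²)` there.
For `z ≥ 4/5`, Jordan's inequality `z ≤ sin (π z / 2)` gives
`z cot (π z / 2) ≤ cos (π z / 2) = sin (π (1 - z) / 2) ≤ π (1 - z) / 2`, and this is at most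
`(2 / π) √(1 - z²)` because `π⁴ (1 - z) ≤ 16 (1 + z)` once `z ≥ 4/5`.
-/

open Real

theorem Real.cos_le_one_sub_sq_div_two_add_pow_four_div (x : ℝ) :
    cos x ≤ 1 - x ^ 2 / 2 + x ^ 4 / 24 := by
  rcases le_or_gt (x ^ 2) 24 with hx | hx
  · set y := |x| / 2 with hy
    have hy0 : 0 ≤ y := by positivity
    have hyx : y ^ 2 = x ^ 2 / 4 := by rw [hy, div_pow, sq_abs]; norm_num
    have hcos : cos x = 1 - 2 * sin y ^ 2 := by
      rw [← cos_abs, show |x| = 2 * y by rw [hy]; ring, cos_two_mul', ← sin_sq_add_cos_sq y]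
      ring
    have hcube : 0 ≤ y - y ^ 3 / 6 := by nlinarith
    have hsin : (y - y ^ 3 / 6) ^ 2 ≤ sin y ^ 2 := pow_le_pow_left₀ hcube (sin_ge_sub_cube hy0) 2
    nlinarith [pow_two_nonneg (y ^ 3)]
  · nlinarith [cos_le_one x]

theorem Real.mul_cos_le_sin_mul_one_sub_sq_div_three {t : ℝ} (ht0 : 0 ≤ t) (ht : t ^ 2 ≤ 3) :
    t * cos t ≤ sin t * (1 - t ^ 2 / 3) := by
  have hfactor : 0 ≤ 1 - t ^ 2 / 3 := by linarith
  calc t * cos t ≤ t * (1 - t ^ 2 / 2 + t ^ 4 / 24) :=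
        mul_le_mul_of_nonneg_left (cos_le_one_sub_sq_div_two_add_pow_four_div t) ht0
    _ ≤ (t - t ^ 3 / 6) * (1 - t ^ 2 / 3) := by nlinarith [pow_nonneg ht0 5]
    _ ≤ sin t * (1 - t ^ 2 / 3) := mul_le_mul_of_nonneg_right (sin_ge_sub_cube ht0) hfactor

section

variable {z : ℝ}

theorem mul_cot_pi_mul_div_two_le (hz0 : 0 ≤ z) (hz1 : z ≤ 1) :
    z * (cos (π * z / 2) / sin (π * z / 2)) ≤ 2 / π * (1 - π ^ 2 * z ^ 2 / 12) := by
  rcases hz0.eq_or_lt with rfl | hz0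
  · simpa using div_nonneg zero_le_two pi_pos.le
  set t := π * z / 2 with ht
  have ht0 : 0 < t := by positivity
  have hsin : 0 < sin t := sin_pos_of_pos_of_lt_pi ht0 (by nlinarith [pi_pos])
  have ht3 : t ^ 2 ≤ 3 := by
    have : t ≤ π / 2 := by nlinarith [pi_pos]
    nlinarith [pi_lt_d2]
  have hcot : cos t / sin t ≤ (1 - t ^ 2 / 3) / t := by
    rw [div_le_div_iff₀ hsin ht0]
    linarith [mul_cos_le_sin_mul_one_sub_sq_div_three ht0.le ht3]
  calc z * (cos t / sin t) ≤ z * ((1 - t ^ 2 / 3) / t) := mul_le_mul_of_nonneg_left hcot hz0.le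
    _ = 2 / π * (1 - π ^ 2 * z ^ 2 / 12) := by
        rw [ht]; field_simp; ring

theorem one_sub_pi_sq_mul_sq_div_twelve_le_sqrt (hz0 : 0 ≤ z) (hz : z ≤ 4 / 5) :
    1 - π ^ 2 * z ^ 2 / 12 ≤ √(1 - z ^ 2) := by
  have hz2 : z ^ 2 ≤ 16 / 25 := by nlinarith
  have hpi2_lt : π ^ 2 < 10 := by nlinarith [pi_lt_d2, pi_pos]
  have hpi2_gt : 9 < π ^ 2 := by nlinarith [pi_gt_three]
  have hprod : π ^ 4 * z ^ 2 ≤ 64 := by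
    have hpi4 : π ^ 4 ≤ 100 := by nlinarith
    nlinarith [mul_le_mul hpi4 hz2 (sq_nonneg z) (by norm_num)]
  apply le_sqrt_of_sq_le
  nlinarith [mul_nonneg (sq_nonneg z) (sub_nonneg.2 hprod)]

theorem mul_cot_pi_mul_div_two_le_cos (hz0 : 0 ≤ z) (hz1 : z ≤ 1) :
    z * (cos (π * z / 2) / sin (π * z / 2)) ≤ cos (π * z / 2) := by
  have hjordan : z ≤ sin (π * z / 2) := by
    have h := mul_le_sin (x := π * z / 2) (by positivity) (by nlinarith [pi_pos])
    rwa [show 2 / π * (π * z / 2) = z by field_simp] at h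
  have hcos : 0 ≤ cos (π * z / 2) :=
    cos_nonneg_of_mem_Icc ⟨by nlinarith [pi_pos], by nlinarith [pi_pos]⟩
  rw [mul_div_left_comm]
  exact mul_le_of_le_one_right hcos (div_le_one_of_le₀ hjordan (hz0.trans hjordan))

theorem cos_pi_mul_div_two_le (hz1 : z ≤ 1) : cos (π * z / 2) ≤ π * (1 - z) / 2 := by
  rw [show π * z / 2 = π / 2 - π * (1 - z) / 2 by ring, cos_pi_div_two_sub]
  exact sin_le (by nlinarith [pi_pos])

theorem pi_mul_one_sub_div_two_le_sqrt (hz : 4 / 5 ≤ z) (hz1 : z ≤ 1) :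
    π * (1 - z) / 2 ≤ 2 / π * √(1 - z ^ 2) := by
  have hpi4 : π ^ 4 < 99 := by
    have hpi2 : π ^ 2 < 9.93 := by nlinarith [pi_lt_d2, pi_pos]
    nlinarith [sq_nonneg π]
  have hsq : (π ^ 2 * (1 - z) / 4) ^ 2 ≤ 1 - z ^ 2 := by
    nlinarith [mul_le_mul_of_nonneg_left hpi4.le (mul_nonneg (sub_nonneg.2 hz1) (sub_nonneg.2 hz1))]
  calc π * (1 - z) / 2 = 2 / π * (π ^ 2 * (1 - z) / 4) := by field_simp; ring
    _ ≤ 2 / π * √(1 - z ^ 2) := by gcongr; exact le_sqrt_of_sq_le hsq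

end

/-- For `0 ≤ z ≤ 1`, `z * cot (π z / 2) ≤ (2/π) √(1 - z²)`, i.e.
`(4 z cot(π z/2)) / (π √(1-z²)) ≤ 8/π²`. (At the endpoints the expression is
interpreted via the convention that division by `sin 0 = 0` yields `0`.) -/
theorem cot_estimate (z : ℝ) (hz0 : 0 ≤ z) (hz1 : z ≤ 1) :
    z * (Real.cos (Real.pi * z / 2) / Real.sin (Real.pi * z / 2)) ≤
      (2 / Real.pi) * Real.sqrt (1 - z ^ 2) := by
  rcases le_total z (4 / 5) with hz | hz
  · calc _ ≤ 2 / π * (1 - π ^ 2 * z ^ 2 / 12) := mul_cot_pi_mul_div_two_le hz0 hz1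
      _ ≤ 2 / π * √(1 - z ^ 2) := by
        gcongr; exact one_sub_pi_sq_mul_sq_div_twelve_le_sqrt hz0 hz
  · calc _ ≤ cos (π * z / 2) := mul_cot_pi_mul_div_two_le_cos hz0 hz1
      _ ≤ π * (1 - z) / 2 := cos_pi_mul_div_two_le hz1
      _ ≤ 2 / π * √(1 - z ^ 2) := pi_mul_one_sub_div_two_le_sqrt hz hz1
end

section
/- Let g : ℝ → ℝ be a continuously differentiable function supported in an interval of length a > 0. Then ‖g'‖_{L²} ≥ (π/a) ‖g‖_{L²}. -/
open Real MeasureTheory Filter Topology Set Function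

/-! Put `k = π / a` and `s x = sin (k (x - c))`, which is positive on `(c, c + a)` and vanishes
at both ends. There `F = k g² cos (k (x - c)) / s` satisfies Picone's identity
`F' = g'² - k² g² - (g' - g s' / s)²`, so `x ↦ ∫_c^x (g'² - k² g²) - F x` is monotone on
`(c, c + a)`. As `g` and `s` vanish at the endpoints while `s'` does not, `F → 0` there, and
hence `∫_c^{c+a} (g'² - k² g²) ≥ 0`. -/

lemma HasDerivAt.tendsto_sq_div_of_eq_zero {f s : ℝ → ℝ} {p d m : ℝ} (hf : HasDerivAt f d p)
    (hs : HasDerivAt s m p) (hm : m ≠ 0) (hfp : f p = 0) (hsp : s p = 0) :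
    Tendsto (fun x => f x ^ 2 / s x) (𝓝[≠] p) (𝓝 0) := by
  have hf_zero : Tendsto f (𝓝[≠] p) (𝓝 0) :=
    hfp ▸ hf.continuousAt.tendsto.mono_left nhdsWithin_le_nhds
  have hslopes : Tendsto (fun x => f x * (slope f p x / slope s p x)) (𝓝[≠] p) (𝓝 (0 * (d / m))) :=
    hf_zero.mul ((hasDerivAt_iff_tendsto_slope.mp hf).div (hasDerivAt_iff_tendsto_slope.mp hs) hm)
  rw [zero_mul] at hslopes
  refine hslopes.congr' ?_
  filter_upwards [self_mem_nhdsWithin] with x hx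
  have hxp : x - p ≠ 0 := sub_ne_zero.mpr hx
  simp only [slope, hfp, hsp, sub_zero, vsub_eq_sub, smul_eq_mul]
  rcases eq_or_ne (s x) 0 with h | h
  · simp [h]
  · field_simp

/-- The boundary term `k g² cot (k (x - c))` of Picone's identity for the eigenfunction
`sin (k (x - c))`. -/
noncomputable def piconeTerm (g : ℝ → ℝ) (k c x : ℝ) : ℝ :=
  k * g x ^ 2 * cos (k * (x - c)) / sin (k * (x - c))

lemma hasDerivAt_mul_sub (k c x : ℝ) : HasDerivAt (fun y => k * (y - c)) k x := by
  simpa using ((hasDerivAt_id x).sub_const c).const_mul k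

lemma hasDerivAt_sin_mul_sub (k c x : ℝ) :
    HasDerivAt (fun y => sin (k * (y - c))) (cos (k * (x - c)) * k) x :=
  (hasDerivAt_sin _).comp x (hasDerivAt_mul_sub k c x)

lemma hasDerivAt_piconeTerm {g : ℝ → ℝ} {k c x : ℝ} (hg : DifferentiableAt ℝ g x)
    (hx : sin (k * (x - c)) ≠ 0) :
    HasDerivAt (piconeTerm g k c)
      (deriv g x ^ 2 - k ^ 2 * g x ^ 2
        - (deriv g x - k * g x * (cos (k * (x - c)) / sin (k * (x - c)))) ^ 2) x := by
  have hcos : HasDerivAt (fun y => cos (k * (y - c))) (-sin (k * (x - c)) * k) x :=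
    (hasDerivAt_cos _).comp x (hasDerivAt_mul_sub k c x)
  refine ((((hg.hasDerivAt.fun_pow 2).const_mul k).fun_mul hcos).div
    (hasDerivAt_sin_mul_sub k c x) hx).congr_deriv ?_
  field_simp
  ring

lemma tendsto_piconeTerm {g : ℝ → ℝ} {k c p : ℝ} (hk : k ≠ 0) (hg : DifferentiableAt ℝ g p)
    (hgp : g p = 0) (hsin : sin (k * (p - c)) = 0) :
    Tendsto (piconeTerm g k c) (𝓝[≠] p) (𝓝 0) := by
  have hcos : cos (k * (p - c)) ≠ 0 := by
    rcases sin_eq_zero_iff_cos_eq.mp hsin with h | h <;> simp [h]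
  have hquot := hg.hasDerivAt.tendsto_sq_div_of_eq_zero (hasDerivAt_sin_mul_sub k c p)
    (mul_ne_zero hcos hk) hgp hsin
  have hfactor : Tendsto (fun x => k * cos (k * (x - c))) (𝓝[≠] p) (𝓝 (k * cos (k * (p - c)))) :=
    (Continuous.tendsto (by fun_prop) p).mono_left nhdsWithin_le_nhds
  refine (mul_zero (k * cos (k * (p - c))) ▸ hfactor.mul hquot).congr fun x => ?_
  simp only [piconeTerm]
  ring

lemma le_of_monotoneOn_sub_of_tendsto_zero {Φ F : ℝ → ℝ} {c d : ℝ} (hcd : c < d)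
    (hΦc : ContinuousWithinAt Φ (Ioi c) c) (hΦd : ContinuousWithinAt Φ (Iio d) d)
    (hFc : Tendsto F (𝓝[>] c) (𝓝 0)) (hFd : Tendsto F (𝓝[<] d) (𝓝 0))
    (hmono : MonotoneOn (Φ - F) (Ioo c d)) : Φ c ≤ Φ d := by
  have hleft : ∀ v ∈ Ioo c d, Φ c ≤ Φ v - F v := fun v hv => by
    refine le_of_tendsto (sub_zero (Φ c) ▸ hΦc.tendsto.sub hFc) ?_
    filter_upwards [Ioo_mem_nhdsGT hv.1] with u hu
    exact hmono ⟨hu.1, hu.2.trans hv.2⟩ hv hu.2.le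
  refine ge_of_tendsto (sub_zero (Φ d) ▸ hΦd.tendsto.sub hFd) ?_
  filter_upwards [Ioo_mem_nhdsLT hcd] with v hv using hleft v hv

theorem pi_div_sq_mul_intervalIntegral_sq_le {g : ℝ → ℝ} {a c : ℝ} (ha : 0 < a)
    (hg : ContDiff ℝ 1 g) (hgc : g c = 0) (hga : g (c + a) = 0) :
    (π / a) ^ 2 * ∫ x in c..c + a, g x ^ 2 ≤ ∫ x in c..c + a, deriv g x ^ 2 := by
  set k := π / a
  have hk : 0 < k := div_pos pi_pos ha
  have hdiff : Differentiable ℝ g := hg.differentiable one_ne_zero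
  have hg' := hg.continuous_deriv le_rfl
  have hg₀ := hg.continuous
  have hh : Continuous fun x => deriv g x ^ 2 - k ^ 2 * g x ^ 2 := by fun_prop
  set Φ := fun x => ∫ t in c..x, (deriv g t ^ 2 - k ^ 2 * g t ^ 2)
  have hΦ : ∀ x, HasDerivAt Φ (deriv g x ^ 2 - k ^ 2 * g x ^ 2) x := fun x =>
    (hh.integral_hasStrictDerivAt c x).hasDerivAt
  have hsin_pos : ∀ x ∈ Ioo c (c + a), 0 < sin (k * (x - c)) := fun x hx => by
    refine sin_pos_of_pos_of_lt_pi (mul_pos hk (by linarith [hx.1])) ?_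
    calc k * (x - c) < k * a := by gcongr; linarith [hx.2]
      _ = π := div_mul_cancel₀ π ha.ne'
  have hmono : MonotoneOn (Φ - piconeTerm g k c) (Ioo c (c + a)) := by
    have hderiv : ∀ x ∈ Ioo c (c + a), HasDerivAt (Φ - piconeTerm g k c)
        ((deriv g x - k * g x * (cos (k * (x - c)) / sin (k * (x - c)))) ^ 2) x :=
      fun x hx => ((hΦ x).sub (hasDerivAt_piconeTerm (hdiff x) (hsin_pos x hx).ne')).congr_deriv
        (by ring)
    refine monotoneOn_of_deriv_nonneg (convex_Ioo _ _)
      (fun x hx => (hderiv x hx).continuousAt.continuousWithinAt) ?_ ?_ <;> rw [interior_Ioo]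
    · exact fun x hx => (hderiv x hx).differentiableAt.differentiableWithinAt
    · exact fun x hx => (hderiv x hx).deriv ▸ sq_nonneg _
  have hsin_c : sin (k * (c - c)) = 0 := by simp
  have hsin_d : sin (k * (c + a - c)) = 0 := by
    rw [add_sub_cancel_left, div_mul_cancel₀ π ha.ne', sin_pi]
  have hΦ_le := le_of_monotoneOn_sub_of_tendsto_zero (by linarith)
    (hΦ c).continuousAt.continuousWithinAt (hΦ (c + a)).continuousAt.continuousWithinAt
    ((tendsto_piconeTerm hk.ne' (hdiff c) hgc hsin_c).mono_left
      (nhdsWithin_mono _ fun _ h => h.ne'))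
    ((tendsto_piconeTerm hk.ne' (hdiff _) hga hsin_d).mono_left
      (nhdsWithin_mono _ fun _ h => h.ne)) hmono
  simp only [Φ, intervalIntegral.integral_same] at hΦ_le
  rw [intervalIntegral.integral_sub
    ((by fun_prop : Continuous fun x => deriv g x ^ 2).intervalIntegrable _ _)
    ((by fun_prop : Continuous fun x => k ^ 2 * g x ^ 2).intervalIntegrable _ _),
    intervalIntegral.integral_const_mul] at hΦ_le
  linarith

lemma integral_eq_intervalIntegral_of_support_subset {f : ℝ → ℝ} {c d : ℝ} (hcd : c ≤ d)
    (hf : support f ⊆ Icc c d) : ∫ x, f x = ∫ x in c..d, f x := by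
  rw [intervalIntegral.integral_of_le hcd, ← integral_Icc_eq_integral_Ioc]
  exact (setIntegral_eq_integral_of_forall_compl_eq_zero
    fun x hx => notMem_support.mp fun h => hx (hf h)).symm

/-- Poincaré (Friedrichs) inequality with optimal constant: if `g` is `C¹` with
compact support contained in an interval `[c, c+a]` of length `a > 0`, then
`(π/a) ‖g‖_{L²(ℝ)} ≤ ‖g'‖_{L²(ℝ)}`. -/
theorem poincare_optimal (g : ℝ → ℝ) (a c : ℝ) (ha : 0 < a)
    (hg : ContDiff ℝ 1 g) (hsupp : Function.support g ⊆ Set.Icc c (c + a)) :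
    (Real.pi / a) * Real.sqrt (∫ x : ℝ, (g x) ^ 2) ≤
      Real.sqrt (∫ x : ℝ, (deriv g x) ^ 2) := by
  have hsupp_Ioo : support g ⊆ Ioo c (c + a) := by
    simpa only [interior_Icc] using hg.continuous.isOpen_support.subset_interior_iff.mpr hsupp
  have hgc : g c = 0 := notMem_support.mp fun h => (hsupp_Ioo h).1.false
  have hga : g (c + a) = 0 := notMem_support.mp fun h => (hsupp_Ioo h).2.false
  have hac : c ≤ c + a := by linarith
  rw [integral_eq_intervalIntegral_of_support_subset hac
      (by simpa only [support_pow _ two_ne_zero] using hsupp),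
    integral_eq_intervalIntegral_of_support_subset hac
      (by simpa only [support_pow _ two_ne_zero] using
        (support_deriv_subset.trans (closure_minimal hsupp isClosed_Icc)))]
  calc π / a * √(∫ x in c..c + a, g x ^ 2) = √((π / a) ^ 2 * ∫ x in c..c + a, g x ^ 2) := by
        rw [sqrt_mul (sq_nonneg _), sqrt_sq (div_pos pi_pos ha).le]
    _ ≤ √(∫ x in c..c + a, deriv g x ^ 2) :=
        sqrt_le_sqrt (pi_div_sq_mul_intervalIntegral_sq_le ha hg hgc hga)
end

section
/- For every m ≥ 1 with 2m > l/π one has 0 > B_m > −2l/(π²m), and for every m ≥ 1 with 2m ≤ l/π one has 0 > B_m > −4l/(π³m), where B_m = −4A_m coth(πA_m/2)/(π(A_m²+1)) with A_m = √(4π²m²/l² − 1) in the first case, and B_m = −4A_m cot(πA_m/2)/(π(1−A_m²)) with A_m = √(1 − 4π²m²/l²) in the second case (and B_m = −8/π² when 4π²m²/l² = 1, which satisfies the first bound). -/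
/-!
With `q = 4π²m²/l²` (so `√q = 2πm/l`), in both main cases `B = -4X/(πq)` with
`X = A coth(πA/2) < √(A² + 1)`, resp. `X = A cot(πA/2) < (2/π)√(1 - A²)`,
and `A² + 1`, resp. `1 - A²`, equals `q`. The hyperbolic bound is `sinh t > t`.
The trigonometric one, at `t = πA/2`, is `π²t² < sin² t (π² + (π² - 4)t²)` on `(0, π/2)`;
it is tight at `t = π/2`, so it is checked with `sin t > t - t³/6` for `t ≤ 1.3`
and with `cos y ≥ 1 - y²/2` at `y = π/2 - t` beyond.
-/

open Real

lemma pi_sq_mul_sq_lt_sin_sq_mul_of_le {t : ℝ} (h0 : 0 < t) (h1 : t ≤ 13 / 10) :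
    π ^ 2 * t ^ 2 < sin t ^ 2 * (π ^ 2 + (π ^ 2 - 4) * t ^ 2) := by
  have hπ : 9.85 < π ^ 2 := by nlinarith [pi_gt_d2]
  have hu : t ^ 2 ≤ 1.69 := by nlinarith
  have hs : 0 < t - t ^ 3 / 6 := by nlinarith [mul_pos h0 (show 0 < 1 - t ^ 2 / 6 by linarith)]
  -- with `u = t²`, `(1 - u / 6)² (π² + (π² - 4) u) - π² = u Q(u)`
  have hQ : 0 < (2 * π ^ 2 / 3 - 4) - (11 * π ^ 2 / 36 - 4 / 3) * t ^ 2
      + (π ^ 2 - 4) / 36 * (t ^ 2) ^ 2 := by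
    have hc : 0 < 24 - 11 * t ^ 2 + (t ^ 2) ^ 2 := by nlinarith [sq_nonneg t]
    nlinarith [mul_pos (sub_pos.2 hπ) hc, sq_nonneg (t ^ 2 - 1.69), sq_nonneg t]
  calc π ^ 2 * t ^ 2 < (t - t ^ 3 / 6) ^ 2 * (π ^ 2 + (π ^ 2 - 4) * t ^ 2) := by
        nlinarith [mul_pos (pow_pos h0 4) hQ]
    _ ≤ sin t ^ 2 * (π ^ 2 + (π ^ 2 - 4) * t ^ 2) := by
        gcongr
        · nlinarith
        · exact (sin_gt_sub_cube h0).le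

lemma pi_sq_mul_sq_lt_sin_sq_mul_of_ge {t : ℝ} (h1 : 13 / 10 ≤ t) (h2 : t < π / 2) :
    π ^ 2 * t ^ 2 < sin t ^ 2 * (π ^ 2 + (π ^ 2 - 4) * t ^ 2) := by
  have hπ : 3.14 < π := pi_gt_d2
  have hπ' : π < 3.15 := pi_lt_d2
  obtain ⟨y, rfl⟩ : ∃ y, t = π / 2 - y := ⟨π / 2 - t, by ring⟩
  have hy : 0 < y := by linarith
  have hy2 : 0 ≤ 1 - y ^ 2 / 2 := by nlinarith
  have hsin : 1 - y ^ 2 ≤ sin (π / 2 - y) ^ 2 := by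
    rw [sin_pi_div_two_sub]
    nlinarith [pow_le_pow_left₀ hy2 one_sub_sq_div_two_le_cos 2]
  -- `π² - 4t² = 2y (π + 2t)`, so the claim reduces to this
  have hmain : y * ((π ^ 2 - 4) * (π / 2 - y) ^ 2 + π ^ 2 + 4) < 4 * π := by
    have ht : (π / 2 - y) ^ 2 < 2.5 := by nlinarith
    have : (π ^ 2 - 4) * (π / 2 - y) ^ 2 + π ^ 2 + 4 < 30 := by
      nlinarith [mul_le_mul_of_nonneg_left ht.le (show 0 ≤ π ^ 2 - 4 by nlinarith)]
    nlinarith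
  calc π ^ 2 * (π / 2 - y) ^ 2 < (1 - y ^ 2) * (π ^ 2 + (π ^ 2 - 4) * (π / 2 - y) ^ 2) := by
        nlinarith [mul_pos hy (sub_pos.2 hmain)]
    _ ≤ _ := by gcongr; nlinarith

lemma pi_sq_mul_sq_lt_sin_sq_mul {t : ℝ} (h0 : 0 < t) (h2 : t < π / 2) :
    π ^ 2 * t ^ 2 < sin t ^ 2 * (π ^ 2 + (π ^ 2 - 4) * t ^ 2) := by
  rcases le_or_gt t (13 / 10) with h1 | h1
  · exact pi_sq_mul_sq_lt_sin_sq_mul_of_le h0 h1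
  · exact pi_sq_mul_sq_lt_sin_sq_mul_of_ge h1.le h2

lemma mul_cot_lt_sqrt {z : ℝ} (h0 : 0 < z) (h1 : z < 1) :
    z * (cos (π * z / 2) / sin (π * z / 2)) < 2 / π * √(1 - z ^ 2) := by
  set t := π * z / 2 with ht
  have hz : z = 2 / π * t := by rw [ht]; field_simp
  have ht0 : 0 < t := by positivity
  have ht1 : t < π / 2 := by rw [ht]; nlinarith [pi_pos]
  have hsin : 0 < sin t := sin_pos_of_pos_of_lt_pi ht0 (by linarith)
  have hcos : 0 < cos t := cos_pos_of_mem_Ioo ⟨by linarith, ht1⟩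
  have key : t ^ 2 * (1 - sin t ^ 2) < (1 - (2 / π * t) ^ 2) * sin t ^ 2 := by
    have hdiff : (1 - (2 / π * t) ^ 2) * sin t ^ 2 - t ^ 2 * (1 - sin t ^ 2)
        = (sin t ^ 2 * (π ^ 2 + (π ^ 2 - 4) * t ^ 2) - π ^ 2 * t ^ 2) / π ^ 2 := by
      field_simp; ring
    have := div_pos (sub_pos.2 (pi_sq_mul_sq_lt_sin_sq_mul ht0 ht1)) (by positivity : 0 < π ^ 2)
    linarith
  rw [← sqrt_sq (by positivity : 0 ≤ 2 / π), ← sqrt_mul (by positivity),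
    lt_sqrt (by positivity), mul_pow, div_pow, cos_sq', hz, mul_div_assoc',
    div_lt_iff₀ (by positivity)]
  linarith [mul_lt_mul_of_pos_left key (by positivity : (0 : ℝ) < (2 / π) ^ 2)]

lemma mul_coth_lt_sqrt {z : ℝ} (h0 : 0 < z) :
    z * (cosh (π * z / 2) / sinh (π * z / 2)) < √(z ^ 2 + 1) := by
  have hz : z < sinh (π * z / 2) :=
    calc z < π * z / 2 := by nlinarith [pi_gt_three]
      _ < sinh (π * z / 2) := self_lt_sinh_iff.2 (by positivity)
  have hsinh : 0 < sinh (π * z / 2) := h0.trans hz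
  rw [lt_sqrt (by positivity), mul_pow, div_pow, cosh_sq, mul_div_assoc',
    div_lt_iff₀ (by positivity)]
  nlinarith

lemma neg_four_mul_div_bounds {X q c : ℝ} (hq : 0 < q) (hX : 0 < X) (hXc : X < c * √q) :
    -(4 * X) / (π * q) < 0 ∧ -(4 * c / (π * √q)) < -(4 * X) / (π * q) := by
  have hsq : 0 < √q := sqrt_pos.2 hq
  refine ⟨div_neg_of_neg_of_pos (by linarith) (by positivity), ?_⟩
  rw [neg_div, neg_lt_neg_iff, div_lt_div_iff₀ (by positivity) (by positivity)]
  calc 4 * X * (π * √q) < 4 * (c * √q) * (π * √q) := by gcongr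
    _ = 4 * c * (π * √q ^ 2) := by ring
    _ = 4 * c * (π * q) := by rw [sq_sqrt hq.le]

/-- Bounds for the coefficients `B_m`: for `2m > l/π` (case `A_m² = 4π²m²/l² − 1 > 0`)
one has `0 > B_m > −2l/(π²m)`; for `2m < l/π` (case `A_m² = 1 − 4π²m²/l² > 0`)
one has `0 > B_m > −4l/(π³m)`; and when `4π²m²/l² = 1`, `B_m = −8/π²`
satisfies the first bound. -/
theorem Bm_bounds (l : ℝ) (hl : 1 ≤ l) (m : ℕ) (hm : 1 ≤ m) :
    (1 < 4 * Real.pi ^ 2 * m ^ 2 / l ^ 2 →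
      ∀ A B : ℝ, A = Real.sqrt (4 * Real.pi ^ 2 * m ^ 2 / l ^ 2 - 1) →
      B = -(4 * A * (Real.cosh (Real.pi * A / 2) / Real.sinh (Real.pi * A / 2)))
            / (Real.pi * (A ^ 2 + 1)) →
      B < 0 ∧ -(2 * l / (Real.pi ^ 2 * m)) < B) ∧
    (4 * Real.pi ^ 2 * m ^ 2 / l ^ 2 < 1 →
      ∀ A B : ℝ, A = Real.sqrt (1 - 4 * Real.pi ^ 2 * m ^ 2 / l ^ 2) →
      B = -(4 * A * (Real.cos (Real.pi * A / 2) / Real.sin (Real.pi * A / 2)))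
            / (Real.pi * (1 - A ^ 2)) →
      B < 0 ∧ -(4 * l / (Real.pi ^ 3 * m)) < B) ∧
    (4 * Real.pi ^ 2 * m ^ 2 / l ^ 2 = 1 →
      (-(8 / Real.pi ^ 2) : ℝ) < 0 ∧
      -(2 * l / (Real.pi ^ 2 * m)) < -(8 / Real.pi ^ 2)) := by
  have hl0 : 0 < l := by linarith
  have hm0 : (0 : ℝ) < m := by exact_mod_cast hm
  have hfreq : 4 * π ^ 2 * m ^ 2 / l ^ 2 = (2 * π * m / l) ^ 2 := by ring
  have hfreq_pos : 0 < 2 * π * m / l := by positivity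
  refine ⟨fun h A B hA hB => ?_, fun h A B hA hB => ?_, fun h => ?_⟩
  · have hA0 : 0 < A := hA ▸ sqrt_pos.2 (by linarith)
    have hq : A ^ 2 + 1 = (2 * π * m / l) ^ 2 := by
      rw [hA, sq_sqrt (by linarith), hfreq]; ring
    have hbound : 2 * l / (π ^ 2 * m) = 4 * 1 / (π * √(A ^ 2 + 1)) := by
      rw [hq, sqrt_sq hfreq_pos.le]; field_simp; ring
    rw [hB, mul_assoc, hbound]
    exact neg_four_mul_div_bounds (by positivity) (by positivity)
      (by rw [one_mul]; exact mul_coth_lt_sqrt hA0)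
  · have hA0 : 0 < A := hA ▸ sqrt_pos.2 (by linarith)
    have hq : 1 - A ^ 2 = (2 * π * m / l) ^ 2 := by
      rw [hA, sq_sqrt (by linarith), hfreq]; ring
    have hA1 : A < 1 := by nlinarith
    have hbound : 4 * l / (π ^ 3 * m) = 4 * (2 / π) / (π * √(1 - A ^ 2)) := by
      rw [hq, sqrt_sq hfreq_pos.le]; field_simp
    rw [hB, mul_assoc, hbound]
    have hcos : 0 < cos (π * A / 2) :=
      cos_pos_of_mem_Ioo ⟨by nlinarith [pi_pos], by nlinarith [pi_pos]⟩
    have hsin : 0 < sin (π * A / 2) :=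
      sin_pos_of_pos_of_lt_pi (by positivity) (by nlinarith [pi_pos])
    exact neg_four_mul_div_bounds (by nlinarith) (by positivity) (mul_cot_lt_sqrt hA0 hA1)
  · have hl : l = 2 * π * m := by
      rw [hfreq, pow_eq_one_iff_of_nonneg hfreq_pos.le two_ne_zero] at h
      field_simp at h; linarith
    refine ⟨neg_neg_of_pos (by positivity), ?_⟩
    rw [hl, neg_lt_neg_iff, div_lt_div_iff₀ (by positivity) (by positivity)]
    nlinarith [mul_lt_mul_of_pos_left pi_gt_three (by positivity : 0 < 4 * π ^ 2 * m)]
end
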